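/- arXiv:1507.01481 — 3 statements merged into one kernel-verified Lean document; each statement's English description precedes it below -/
import Mathlib

section
/- Let K be an o-symmetric convex body in ℝ² (K = −K) with |K|·|K*| ≤ (1+ε)·8 for some ε > 0. Let x ∈ ℝ², λ₁, λ₂ > 0, and let P be a parallelogram such that λ₁P + x ⊆ K ⊆ λ₂P + x and λ₂/λ₁ ≤ 1 + 200ε < 2. Assume further that the parallelogram [(λ₁+λ₂)/2]·P is a square of Euclidean diameter 1. Then the centre of symmetry of the square [(λ₁+λ₂)/2]·P + x is at Euclidean distance at most 336·√ε from the origin o. -/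
open MeasureTheory Pointwise Real
open scoped RealInnerProductSpace

/-- Area (two-dimensional Lebesgue measure) of a subset of the plane `ℂ ≅ ℝ²`. -/
noncomputable def area (K : Set ℂ) : ℝ := (volume K).toReal

/-- The polar body `K* = {x : ⟨x,y⟩ ≤ 1 for all y ∈ K}`. -/
def polarBody (K : Set ℂ) : Set ℂ := {x | ∀ y ∈ K, ⟪x, y⟫ ≤ 1}

/-- A convex body: a compact convex set with nonempty interior. -/
def IsConvexBody (K : Set ℂ) : Prop := Convex ℝ K ∧ IsCompact K ∧ (interior K).Nonempty

lemma mem_para {c u v p : ℂ}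
    (hp : p ∈ convexHull ℝ {c + u + v, c + u - v, c - u + v, c - u - v}) :
    ∃ a b : ℝ, |a| ≤ 1 ∧ |b| ≤ 1 ∧ p = c + a • u + b • v := by
  set T : Set ℂ := {p | ∃ a b : ℝ, |a| ≤ 1 ∧ |b| ≤ 1 ∧ p = c + a • u + b • v} with hT
  have hconv : Convex ℝ T := by
    intro p hp q hq s t hs ht hst
    obtain ⟨a1, b1, ha1, hb1, rfl⟩ := hp
    obtain ⟨a2, b2, ha2, hb2, rfl⟩ := hq
    refine ⟨s * a1 + t * a2, s * b1 + t * b2, ?_, ?_, ?_⟩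
    · calc |s * a1 + t * a2| ≤ |s * a1| + |t * a2| := abs_add_le _ _
        _ ≤ s * 1 + t * 1 := by
            rw [abs_mul, abs_mul, abs_of_nonneg hs, abs_of_nonneg ht]; gcongr
        _ = 1 := by linarith
    · calc |s * b1 + t * b2| ≤ |s * b1| + |t * b2| := abs_add_le _ _
        _ ≤ s * 1 + t * 1 := by
            rw [abs_mul, abs_mul, abs_of_nonneg hs, abs_of_nonneg ht]; gcongr
        _ = 1 := by linarith
    · obtain rfl : t = 1 - s := by linarith
      module
  have hsub : ({c + u + v, c + u - v, c - u + v, c - u - v} : Set ℂ) ⊆ T := by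
    intro z hz
    simp only [Set.mem_insert_iff, Set.mem_singleton_iff] at hz
    rcases hz with rfl | rfl | rfl | rfl
    · exact ⟨1, 1, by norm_num, by norm_num, by module⟩
    · exact ⟨1, -1, by norm_num, by norm_num, by module⟩
    · exact ⟨-1, 1, by norm_num, by norm_num, by module⟩
    · exact ⟨-1, -1, by norm_num, by norm_num, by module⟩
  exact convexHull_min hsub hconv hp

set_option maxHeartbeats 1600000 in
/-- Stability of the centre of polarity in the Mahler–Reisner inequality.
Here `P` is the parallelogram with centre `c` and vertices `c ± u ± v`; the
hypotheses `‖u‖ = ‖v‖`, `⟪u,v⟫ = 0` say that `P` is a square, and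
`Metric.diam (((λ₁+λ₂)/2) • P) = 1` normalises `[(λ₁+λ₂)/2]·P` to be a square of
(Euclidean) diameter `1`.  The centre of `[(λ₁+λ₂)/2]·P + x` is
`((λ₁+λ₂)/2)·c + x`, and it is at distance at most `336·√ε` from the origin. -/
theorem mahler_reisner_centre_stability (K : Set ℂ) (hK : IsConvexBody K)
    (hsym : K = -K) (ho : (0 : ℂ) ∈ interior K) (ε : ℝ) (hε : 0 < ε)
    (hvp : area K * area (polarBody K) ≤ (1 + ε) * 8)
    (x c u v : ℂ) (l1 l2 : ℝ) (hl1 : 0 < l1) (hl2 : 0 < l2)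
    (P : Set ℂ) (huv : LinearIndependent ℝ ![u, v])
    (hP : P = convexHull ℝ {c + u + v, c + u - v, c - u + v, c - u - v})
    (hsquare : ‖u‖ = ‖v‖ ∧ ⟪u, v⟫ = 0)
    (hsub1 : x +ᵥ l1 • P ⊆ K) (hsub2 : K ⊆ x +ᵥ l2 • P)
    (hratio : l2 / l1 ≤ 1 + 200 * ε) (hsmall : 1 + 200 * ε < 2)
    (hdiam : Metric.diam (((l1 + l2) / 2) • P) = 1) :
    ‖((l1 + l2) / 2 : ℝ) • c + x‖ ≤ 336 * Real.sqrt ε := by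
  obtain ⟨hnorm_eq, horth⟩ := hsquare
  have hu0 : u ≠ 0 := by simpa using huv.ne_zero 0
  have hupos : 0 < ‖u‖ := norm_pos_iff.mpr hu0
  -- norm formula for a•u + b•v
  have hnab : ∀ a b : ℝ, ‖a • u + b • v‖ ^ 2 = a ^ 2 * ‖u‖ ^ 2 + b ^ 2 * ‖v‖ ^ 2 := by
    intro a b
    rw [norm_add_sq_real, real_inner_smul_left, real_inner_smul_right, horth, norm_smul,
      norm_smul]
    simp only [Real.norm_eq_abs, mul_pow, sq_abs]
    ring
  have huv2 : ‖u + v‖ ^ 2 = ‖u‖ ^ 2 + ‖v‖ ^ 2 := by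
    have := hnab 1 1; simpa using this
  have huvpos : 0 < ‖u + v‖ := by nlinarith [norm_nonneg (u + v)]
  have habs : ∀ a b : ℝ, |a| ≤ 2 → |b| ≤ 2 → ‖a • u + b • v‖ ≤ 2 * ‖u + v‖ := by
    intro a b ha hb
    have h1 := hnab a b
    have ha2 : a ^ 2 ≤ 4 := by nlinarith [sq_abs a, abs_nonneg a]
    have hb2 : b ^ 2 ≤ 4 := by nlinarith [sq_abs b, abs_nonneg b]
    nlinarith [norm_nonneg (a • u + b • v), sq_nonneg (‖u‖), sq_nonneg (‖v‖)]
  -- diameter of the vertex set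
  set S : Set ℂ := {c + u + v, c + u - v, c - u + v, c - u - v} with hS
  have hdS : Metric.diam S = 2 * ‖u + v‖ := by
    apply le_antisymm
    · apply Metric.diam_le_of_forall_dist_le (by positivity)
      intro p hp q hq
      obtain ⟨a1, b1, ha1, hb1, rfl⟩ := mem_para (subset_convexHull ℝ _ hp)
      obtain ⟨a2, b2, ha2, hb2, rfl⟩ := mem_para (subset_convexHull ℝ _ hq)
      rw [dist_eq_norm, show c + a1 • u + b1 • v - (c + a2 • u + b2 • v)
        = (a1 - a2) • u + (b1 - b2) • v from by module]
      exact habs _ _ ((abs_sub _ _).trans (by linarith)) ((abs_sub _ _).trans (by linarith))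
    · have hb : Bornology.IsBounded S := (Set.toFinite S).isBounded
      have h := Metric.dist_le_diam_of_mem hb (show c + u + v ∈ S from by
          rw [hS]; exact Set.mem_insert _ _) (show c - u - v ∈ S from by rw [hS]; simp)
      rw [dist_eq_norm, show c + u + v - (c - u - v) = (2 : ℝ) • (u + v) from by module,
        norm_smul] at h
      simpa using h
  have hkey : (l1 + l2) * ‖u + v‖ = 1 := by
    rw [diam_smul₀, hP, convexHull_diam, hdS, Real.norm_eq_abs,
      abs_of_pos (by positivity)] at hdiam
    linear_combination hdiam
  -- extract the sandwich information at vertices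
  have vertx : ∀ w ∈ P, ∃ a b : ℝ, |a| ≤ 1 ∧ |b| ≤ 1 ∧
      x + x + l1 • w + l2 • (c + a • u + b • v) = 0 := by
    intro w hw
    have h1 : x + l1 • w ∈ K :=
      hsub1 (Set.mem_vadd_set.mpr ⟨l1 • w, Set.smul_mem_smul_set hw, rfl⟩)
    have h2 : -(x + l1 • w) ∈ K := by rw [hsym]; exact Set.neg_mem_neg.mpr h1
    obtain ⟨y, hy, hxy⟩ := Set.mem_vadd_set.mp (hsub2 h2)
    obtain ⟨q, hq, rfl⟩ := Set.mem_smul_set.mp hy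
    obtain ⟨a, b, ha, hb, rfl⟩ := mem_para (by rw [hP] at hq; exact hq)
    refine ⟨a, b, ha, hb, ?_⟩
    have hxy' : x + l2 • (c + a • u + b • v) = -(x + l1 • w) := hxy
    linear_combination (norm := module) hxy'
  have hA : c + u + v ∈ P := by
    rw [hP]; exact subset_convexHull ℝ _ (by rw [hS]; exact Set.mem_insert _ _)
  have hD : c - u - v ∈ P := by
    rw [hP]; exact subset_convexHull ℝ _ (by rw [hS]; simp)
  obtain ⟨a1, b1, ha1, hb1, e1⟩ := vertx _ hA
  obtain ⟨a2, b2, ha2, hb2, e2⟩ := vertx _ hD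
  set d : ℂ := x + x + (l1 + l2) • c with hd
  have E1 : d = (-(l1 + l2 * a1)) • u + (-(l1 + l2 * b1)) • v := by
    linear_combination (norm := module) e1
  have E2 : d = (l1 - l2 * a2) • u + (l1 - l2 * b2) • v := by
    linear_combination (norm := module) e2
  have hzero : ((-(l1 + l2 * a1)) - (l1 - l2 * a2)) • u
      + ((-(l1 + l2 * b1)) - (l1 - l2 * b2)) • v = 0 := by
    linear_combination (norm := module) E1.symm.trans E2
  obtain ⟨hc1, hc2⟩ := LinearIndependent.pair_iff.mp huv _ _ hzero
  obtain ⟨ha1l, ha1r⟩ := abs_le.mp ha1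
  obtain ⟨ha2l, ha2r⟩ := abs_le.mp ha2
  obtain ⟨hb1l, hb1r⟩ := abs_le.mp hb1
  obtain ⟨hb2l, hb2r⟩ := abs_le.mp hb2
  have hαu : -(l1 + l2 * a1) ≤ l2 - l1 := by nlinarith
  have hαl : l1 - l2 ≤ -(l1 + l2 * a1) := by nlinarith
  have hβu : -(l1 + l2 * b1) ≤ l2 - l1 := by nlinarith
  have hβl : l1 - l2 ≤ -(l1 + l2 * b1) := by nlinarith
  have hll : l1 ≤ l2 := by linarith
  have hd2 : ‖d‖ ^ 2 ≤ ((l2 - l1) * ‖u + v‖) ^ 2 := by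
    rw [E1, hnab]
    have h1 : (-(l1 + l2 * a1)) ^ 2 ≤ (l2 - l1) ^ 2 := by nlinarith
    have h2 : (-(l1 + l2 * b1)) ^ 2 ≤ (l2 - l1) ^ 2 := by nlinarith
    nlinarith [sq_nonneg ‖u‖, sq_nonneg ‖v‖]
  have hdle : ‖d‖ ≤ (l2 - l1) * ‖u + v‖ := by
    have h := Real.sqrt_le_sqrt hd2
    rwa [Real.sqrt_sq (norm_nonneg d),
      Real.sqrt_sq (mul_nonneg (by linarith) (norm_nonneg _))] at h
  have hfin : ((l1 + l2) / 2 : ℝ) • c + x = ((1 : ℝ) / 2) • d := by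
    rw [hd]; module
  rw [hfin, norm_smul, Real.norm_eq_abs]
  have hr : l2 ≤ (1 + 200 * ε) * l1 := by
    rw [div_le_iff₀ hl1] at hratio; linarith
  have h1 : l1 * ‖u + v‖ ≤ 1 / 2 := by nlinarith
  have h2 : ‖d‖ ≤ 200 * ε * (l1 * ‖u + v‖) := by nlinarith
  have h50 : |1 / 2| * ‖d‖ ≤ 50 * ε := by
    rw [abs_of_pos (by norm_num : (0:ℝ) < 1/2)]
    nlinarith
  have hsq : Real.sqrt ε * Real.sqrt ε = ε := Real.mul_self_sqrt hε.le
  nlinarith [Real.sqrt_nonneg ε, sq_nonneg (Real.sqrt ε - 1)]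
end

section
/- Let n ≥ 3 be an integer and K a convex body in ℝ² with n-fold rotational symmetry about the origin o, satisfying |K|·|K*| ≤ (1+ε)·n²·sin²(π/n) for some ε > 0. Let x ∈ ℝ², λ₁, λ₂ > 0, and let R_n be a regular n-gon such that λ₁R_n + x ⊆ K ⊆ λ₂R_n + x and λ₂/λ₁ ≤ 1 + 18ε < 1/cos(π/n) ≤ 2. Assume further that the n-gon [(λ₁+λ₂)/2]·R_n has Euclidean diameter 1. Then the centre of the regular n-gon [(λ₁+λ₂)/2]·R_n + x is at Euclidean distance at most 263·√ε from the origin o. -/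
/-!
Write `R_n = z + P` with `P` the regular `n`-gon centred at `0`; it is invariant under the
rotation `ζ = exp (2πi/n)` and lies in the ball of radius `d = diam P` about `0`. If
`a + sP ⊆ b + tP` with `s ≤ t`, comparing the support functions of both sides in the direction
`a - b` gives `‖a - b‖ ≤ (t - s) d`. With `cᵢ = x + λᵢ z`, the symmetry `ζK = K` yields the
inclusions `ζ (c₁ + λ₁P) ⊆ c₂ + λ₂P` and `c₁ + λ₁P ⊆ ζ (c₂ + λ₂P)`, hence
`‖ζ - 1‖ ‖c₁ + c₂‖ ≤ 2 (λ₂ - λ₁) d`. Finally `‖ζ - 1‖ = 2 sin (π/n) ≥ 6 √ε` by the bound on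
`cos (π/n)`, and `(λ₂ - λ₁) d ≤ 18 ε λ₁ d ≤ 18 ε` by the diameter normalisation, so the centre
`(c₁ + c₂)/2` has norm at most `3 √ε`.
-/

open MeasureTheory Pointwise Real
open scoped RealInnerProductSpace

/-- The `n` equally spaced points on the circle of centre `z` determined by `z + w`. -/
noncomputable def ngonVertices (n : ℕ) (z w : ℂ) : Set ℂ :=
  Set.range fun k : Fin n => z + w * Complex.exp (2 * π * Complex.I * ((k : ℕ) : ℂ) / n)

/-- `K` is the regular `n`-gon with centre `z` whose vertices are the `n` equally
spaced points on the circle of centre `z` through `z + w`. -/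
def IsRegularNgon (n : ℕ) (z w : ℂ) (K : Set ℂ) : Prop :=
  w ≠ 0 ∧ K = convexHull ℝ (ngonVertices n z w)

/-- `K` has `n`-fold rotational symmetry about the origin. -/
def HasNFoldSymmetry (n : ℕ) (K : Set ℂ) : Prop :=
  Complex.exp (2 * π * Complex.I / n) • K = K

open Metric

lemma smul_vadd_set {M E : Type*} [AddZeroClass E] [DistribSMul M E] (c : M) (a : E)
    (S : Set E) : c • (a +ᵥ S) = c • a +ᵥ c • S := by
  simp only [← Set.image_smul, ← Set.image_vadd, Set.image_image, vadd_eq_add, smul_add]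

theorem norm_sub_le_of_vadd_smul_subset_vadd_smul {E : Type*} [NormedAddCommGroup E]
    [InnerProductSpace ℝ E] {C : Set E} (hC : IsCompact C) (hne : C.Nonempty) {r s t : ℝ}
    (hr : C ⊆ closedBall 0 r) (ht : 0 ≤ t) (hst : s ≤ t) {a b : E}
    (h : a +ᵥ s • C ⊆ b +ᵥ t • C) : ‖a - b‖ ≤ (t - s) * r := by
  obtain ⟨v, hv, hmax⟩ := hC.exists_isMaxOn hne (f := fun p => ⟪a - b, p⟫) (by fun_prop)
  obtain ⟨_, ⟨p, hp, rfl⟩, hpv⟩ := h (Set.vadd_mem_vadd_set (Set.smul_mem_smul_set hv))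
  have hvr : ‖v‖ ≤ r := mem_closedBall_zero_iff.mp (hr hv)
  have hsupp : ‖a - b‖ ^ 2 ≤ (t - s) * ⟪a - b, v⟫ := by
    have hpeq : a - b = t • p - s • v := by
      simp only [vadd_eq_add] at hpv
      linear_combination (norm := module) -hpv
    have hp_le : ⟪a - b, p⟫ ≤ ⟪a - b, v⟫ := hmax hp
    rw [← real_inner_self_eq_norm_sq]
    nth_rewrite 2 [hpeq]
    rw [inner_sub_right, real_inner_smul_right, real_inner_smul_right]
    nlinarith
  have hinner : ⟪a - b, v⟫ ≤ ‖a - b‖ * r :=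
    (real_inner_le_norm _ _).trans (mul_le_mul_of_nonneg_left hvr (norm_nonneg _))
  have hr0 : 0 ≤ r := (norm_nonneg v).trans hvr
  have hsq : ‖a - b‖ * ‖a - b‖ ≤ ‖a - b‖ * ((t - s) * r) := by
    nlinarith [mul_le_mul_of_nonneg_left hinner (sub_nonneg.mpr hst)]
  rcases (norm_nonneg (a - b)).eq_or_lt with h0 | hpos
  · rw [← h0]; exact mul_nonneg (sub_nonneg.mpr hst) hr0
  · exact le_of_mul_le_mul_left hsq hpos

theorem le_of_vadd_smul_subset_vadd_smul {E : Type*} [NormedAddCommGroup E] [NormedSpace ℝ E]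
    {C : Set E} (hC : Bornology.IsBounded C) (hd : 0 < diam C) {s t : ℝ} (ht : 0 ≤ t) {a b : E}
    (h : a +ᵥ s • C ⊆ b +ᵥ t • C) : s ≤ t := by
  have hdiam := diam_mono h ((hC.smul₀ t).vadd b)
  rw [diam_vadd, diam_vadd, diam_smul₀, diam_smul₀, Real.norm_of_nonneg ht] at hdiam
  exact (le_abs_self s).trans (le_of_mul_le_mul_right hdiam hd)

section RegularNgon

variable {n : ℕ} (w : ℂ)

lemma ngonVertices_eq_vadd (z : ℂ) : ngonVertices n z w = z +ᵥ ngonVertices n 0 w := by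
  simp [ngonVertices, Set.vadd_set_range]

lemma IsRegularNgon.eq_vadd_convexHull {z : ℂ} {Rn : Set ℂ} (h : IsRegularNgon n z w Rn) :
    Rn = z +ᵥ convexHull ℝ (ngonVertices n 0 w) := by
  rw [h.2, ngonVertices_eq_vadd, convexHull_vadd]

lemma isCompact_convexHull_ngonVertices (z : ℂ) :
    IsCompact (convexHull ℝ (ngonVertices n z w)) :=
  (Set.finite_range _).isCompact_convexHull ℝ

lemma ngonVertices_zero_eq_range :
    ngonVertices n 0 w =
      Set.range fun k : Fin n => w * Complex.exp (2 * π * Complex.I / n) ^ (k : ℕ) := by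
  simp only [ngonVertices, zero_add, ← Complex.exp_nat_mul]
  congr! 4
  ring

lemma ngonVertices_zero_eq_image (hn : n ≠ 0) :
    ngonVertices n 0 w = (w * ·) '' {ξ : ℂ | ξ ^ n = 1} := by
  have hζ := Complex.isPrimitiveRoot_exp n hn
  have : NeZero n := ⟨hn⟩
  rw [ngonVertices_zero_eq_range]
  ext p
  simp only [Set.mem_range, Set.mem_image, Set.mem_ofPred_eq]
  constructor
  · rintro ⟨k, rfl⟩
    exact ⟨_, by rw [pow_right_comm, hζ.pow_eq_one, one_pow], rfl⟩
  · rintro ⟨ξ, hξ, rfl⟩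
    obtain ⟨i, hi, rfl⟩ := hζ.eq_pow_of_pow_eq_one hξ
    exact ⟨⟨i, hi⟩, rfl⟩

lemma smul_ngonVertices_zero (hn : n ≠ 0) {ξ : ℂ} (hξ : ξ ^ n = 1) :
    ξ • ngonVertices n 0 w = ngonVertices n 0 w := by
  have hξ0 : ξ ≠ 0 := by rintro rfl; simp [hn] at hξ
  rw [ngonVertices_zero_eq_image w hn]
  ext p
  simp only [Set.mem_smul_set, Set.mem_image, Set.mem_ofPred_eq, smul_eq_mul]
  constructor
  · rintro ⟨_, ⟨η, hη, rfl⟩, rfl⟩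
    exact ⟨ξ * η, by rw [mul_pow, hξ, hη, one_mul], by ring⟩
  · rintro ⟨η, hη, rfl⟩
    refine ⟨w * (ξ⁻¹ * η), ⟨ξ⁻¹ * η, by rw [mul_pow, inv_pow, hξ, hη, inv_one, one_mul], rfl⟩, ?_⟩
    field_simp

lemma zero_mem_convexHull_ngonVertices (hn : 2 ≤ n) :
    (0 : ℂ) ∈ convexHull ℝ (ngonVertices n 0 w) := by
  set ζ := Complex.exp (2 * π * Complex.I / n)
  have hsum : ∑ k : Fin n, w * ζ ^ (k : ℕ) = 0 := by
    rw [← Finset.mul_sum, Fin.sum_univ_eq_sum_range (ζ ^ ·),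
      (Complex.isPrimitiveRoot_exp n (by omega)).geom_sum_eq_zero (by omega), mul_zero]
  have := Finset.univ.centerMass_mem_convexHull (R := ℝ) (w := fun _ => 1)
    (fun _ _ => zero_le_one) (by simp; omega) (fun k _ => Set.mem_range_self (f := fun k : Fin n =>
      w * ζ ^ (k : ℕ)) k)
  rw [ngonVertices_zero_eq_range]
  simpa [Finset.centerMass, hsum] using this

lemma smul_convexHull_ngonVertices_zero (hn : n ≠ 0) {ξ : ℂ} (hξ : ξ ^ n = 1) :
    ξ • convexHull ℝ (ngonVertices n 0 w) = convexHull ℝ (ngonVertices n 0 w) := by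
  have hlin : IsLinearMap ℝ (ξ • · : ℂ → ℂ) := ⟨smul_add ξ, fun c p => smul_comm ξ c p⟩
  rw [← Set.image_smul, hlin.image_convexHull, Set.image_smul, smul_ngonVertices_zero w hn hξ]

end RegularNgon

theorem norm_sub_one_mul_norm_add_le_of_sandwich {C K : Set ℂ} (hC : IsCompact C) (hne : C.Nonempty)
    {r s t : ℝ} (hr : C ⊆ closedBall 0 r) (ht : 0 ≤ t) (hst : s ≤ t) {ζ : ℂ}
    (hζC : ζ • C = C) (hζK : ζ • K = K) {a b : ℂ} (h₁ : a +ᵥ s • C ⊆ K)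
    (h₂ : K ⊆ b +ᵥ t • C) : ‖ζ - 1‖ * ‖a + b‖ ≤ 2 * ((t - s) * r) := by
  have hrot (c : ℂ) (l : ℝ) : ζ • (c +ᵥ l • C) = ζ * c +ᵥ l • C := by
    rw [smul_vadd_set, smul_comm, hζC, smul_eq_mul]
  have hab : ‖ζ * a - b‖ ≤ (t - s) * r :=
    norm_sub_le_of_vadd_smul_subset_vadd_smul hC hne hr ht hst <|
      calc ζ * a +ᵥ s • C = ζ • (a +ᵥ s • C) := (hrot a s).symm
        _ ⊆ ζ • K := Set.smul_set_mono h₁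
        _ = K := hζK
        _ ⊆ b +ᵥ t • C := h₂
  have hba : ‖a - ζ * b‖ ≤ (t - s) * r :=
    norm_sub_le_of_vadd_smul_subset_vadd_smul hC hne hr ht hst <|
      calc a +ᵥ s • C ⊆ K := h₁
        _ = ζ • K := hζK.symm
        _ ⊆ ζ • (b +ᵥ t • C) := Set.smul_set_mono h₂
        _ = ζ * b +ᵥ t • C := hrot b t
  calc ‖ζ - 1‖ * ‖a + b‖ = ‖(ζ * a - b) - (a - ζ * b)‖ := by rw [← norm_mul]; ring_nf
    _ ≤ ‖ζ * a - b‖ + ‖a - ζ * b‖ := norm_sub_le _ _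
    _ ≤ 2 * ((t - s) * r) := by linarith

lemma norm_exp_two_pi_I_div_sub_one (n : ℕ) :
    ‖Complex.exp (2 * π * Complex.I / n) - 1‖ = 2 * Real.sin (π / n) := by
  have harg : 2 * π * Complex.I / n = Complex.I * ((2 * π / n : ℝ) : ℂ) := by push_cast; ring
  have hle : π / n ≤ π := by
    rcases n.eq_zero_or_pos with rfl | hn
    · simp [pi_pos.le]
    · exact div_le_self pi_pos.le (by exact_mod_cast hn)
  rw [harg, Complex.norm_exp_I_mul_ofReal_sub_one, show 2 * π / n / 2 = π / n by ring,
    Real.norm_of_nonneg (mul_nonneg zero_le_two (sin_nonneg_of_nonneg_of_le_pi (by positivity) hle))]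

lemma three_mul_sqrt_le_sin_pi_div {n : ℕ} (hn : 3 ≤ n) {ε : ℝ}
    (h : 1 + 18 * ε < 1 / cos (π / n)) : 3 * √ε ≤ sin (π / n) := by
  have hcos : 1 / 2 ≤ cos (π / n) := by
    rw [← cos_pi_div_three]
    exact cos_le_cos_of_nonneg_of_le_pi (by positivity) (by linarith [pi_pos])
      (div_le_div_of_nonneg_left pi_pos.le (by norm_num) (by exact_mod_cast hn))
  have hsin : 0 ≤ sin (π / n) :=
    sin_nonneg_of_nonneg_of_le_pi (by positivity) (div_le_self pi_pos.le (by norm_cast; omega))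
  have hc : (1 + 18 * ε) * cos (π / n) < 1 := (lt_div_iff₀ (by linarith)).mp h
  have hsq : 9 * ε ≤ sin (π / n) ^ 2 := by
    rcases le_or_gt 0 ε with hε | hε
    · nlinarith [sin_sq_add_cos_sq (π / n), cos_le_one (π / n),
        mul_nonneg hε (sub_nonneg.mpr hcos)]
    · nlinarith [sq_nonneg (sin (π / n))]
  calc 3 * √ε = √(3 ^ 2 * ε) := by rw [Real.sqrt_mul (by positivity), Real.sqrt_sq zero_le_three]
    _ ≤ √(sin (π / n) ^ 2) := Real.sqrt_le_sqrt (by linarith)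
    _ = sin (π / n) := Real.sqrt_sq hsin

theorem nfold_centre_stability_general (n : ℕ) (hn : 3 ≤ n) (K : Set ℂ)
    (hsym : HasNFoldSymmetry n K) (ε : ℝ) (hε : 0 < ε)
    (x z w : ℂ) (l1 l2 : ℝ) (hl1 : 0 < l1) (hl2 : 0 < l2)
    (Rn : Set ℂ) (hRn : IsRegularNgon n z w Rn)
    (hsub1 : x +ᵥ l1 • Rn ⊆ K) (hsub2 : K ⊆ x +ᵥ l2 • Rn)
    (hratio : l2 / l1 ≤ 1 + 18 * ε) (hsmall : 1 + 18 * ε < 1 / Real.cos (π / n))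
    (hdiam : Metric.diam (((l1 + l2) / 2) • Rn) = 1) :
    ‖((l1 + l2) / 2 : ℝ) • z + x‖ ≤ 263 * Real.sqrt ε := by
  set P := convexHull ℝ (ngonVertices n 0 w)
  have hPc : IsCompact P := isCompact_convexHull_ngonVertices w 0
  have hP0 : (0 : ℂ) ∈ P := zero_mem_convexHull_ngonVertices w (by omega)
  have hRnP : Rn = z +ᵥ P := hRn.eq_vadd_convexHull
  have hvadd (l : ℝ) : x +ᵥ l • Rn = (x + l • z) +ᵥ l • P := by
    rw [hRnP, smul_vadd_set, vadd_vadd]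
  have hd : (l1 + l2) / 2 * diam P = 1 := by
    rwa [hRnP, diam_smul₀, diam_vadd, Real.norm_of_nonneg (by positivity)] at hdiam
  have hl12 : l1 ≤ l2 :=
    le_of_vadd_smul_subset_vadd_smul hPc.isBounded
      (pos_of_mul_pos_right (hd ▸ one_pos) (by positivity)) hl2.le
      (hvadd l1 ▸ hvadd l2 ▸ hsub1.trans hsub2)
  have hPd : P ⊆ closedBall 0 (diam P) := fun p hp =>
    mem_closedBall_iff_norm.2 (by simpa using dist_le_diam_of_mem hPc.isBounded hp hP0)
  have key := norm_sub_one_mul_norm_add_le_of_sandwich hPc ⟨0, hP0⟩ hPd hl2.le hl12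
    (smul_convexHull_ngonVertices_zero w (by omega)
      (Complex.isPrimitiveRoot_exp n (by omega)).pow_eq_one)
    hsym (hvadd l1 ▸ hsub1) (hvadd l2 ▸ hsub2)
  rw [norm_exp_two_pi_I_div_sub_one, show x + l1 • z + (x + l2 • z)
    = (2 : ℝ) • (((l1 + l2) / 2 : ℝ) • z + x) by module, norm_smul, Real.norm_two] at key
  have hsin := three_mul_sqrt_le_sin_pi_div hn hsmall
  have hD : (l2 - l1) * diam P ≤ 18 * ε := by
    have hl2' : l2 ≤ (1 + 18 * ε) * l1 := (div_le_iff₀ hl1).mp hratio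
    nlinarith [diam_nonneg (s := P)]
  have hm : 3 * √ε * ‖((l1 + l2) / 2 : ℝ) • z + x‖ ≤ 3 * √ε * (3 * √ε) := by
    nlinarith [Real.sq_sqrt hε.le, norm_nonneg (((l1 + l2) / 2 : ℝ) • z + x)]
  nlinarith [le_of_mul_le_mul_left hm (by positivity), Real.sqrt_nonneg ε]

/-- Stability of the centre of polarity for bodies with `n`-fold rotational symmetry.
Here `R_n` is a regular `n`-gon with centre `z`, normalised so that
`[(λ₁+λ₂)/2]·R_n` has Euclidean diameter `1`; the centre of `[(λ₁+λ₂)/2]·R_n + x`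
is `((λ₁+λ₂)/2)·z + x`, and it is at distance at most `263·√ε` from the origin. -/
theorem nfold_centre_stability (n : ℕ) (hn : 3 ≤ n) (K : Set ℂ)
    (hK : IsConvexBody K) (ho : (0 : ℂ) ∈ interior K)
    (hsym : HasNFoldSymmetry n K) (ε : ℝ) (hε : 0 < ε)
    (hvp : area K * area (polarBody K) ≤ (1 + ε) * ((n : ℝ) ^ 2 * Real.sin (π / n) ^ 2))
    (x z w : ℂ) (l1 l2 : ℝ) (hl1 : 0 < l1) (hl2 : 0 < l2)
    (Rn : Set ℂ) (hRn : IsRegularNgon n z w Rn)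
    (hsub1 : x +ᵥ l1 • Rn ⊆ K) (hsub2 : K ⊆ x +ᵥ l2 • Rn)
    (hratio : l2 / l1 ≤ 1 + 18 * ε) (hsmall : 1 + 18 * ε < 1 / Real.cos (π / n))
    (hdiam : Metric.diam (((l1 + l2) / 2) • Rn) = 1) :
    ‖((l1 + l2) / 2 : ℝ) • z + x‖ ≤ 263 * Real.sqrt ε :=
  nfold_centre_stability_general n hn K hsym ε hε x z w l1 l2 hl1 hl2 Rn hRn hsub1 hsub2 hratio
    hsmall hdiam
end

section
/- Let n ≥ 2 be an integer, let 0 < a₁ ≤ a₂ ≤ … ≤ aₙ be real numbers, and let ε ≥ 0. If (a₁ + … + aₙ)/(n·(a₁·…·aₙ)^{1/n}) ≤ 1 + ε, then for all indices 1 ≤ j, k ≤ n one has a_j/a_k ≥ 1 − 2√(nε). -/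
open Real

set_option maxHeartbeats 1000000 in
/-- Stability version of the AM–GM inequality: if `0 < a₁ ≤ … ≤ aₙ` and the ratio of
the arithmetic to the geometric mean is at most `1 + ε`, then `a_j/a_k ≥ 1 − 2√(nε)`
for all indices `j, k`. -/
theorem am_gm_stability (n : ℕ) (hn : 2 ≤ n) (a : Fin n → ℝ)
    (hpos : ∀ i, 0 < a i) (hmono : Monotone a) (ε : ℝ) (hε : 0 ≤ ε)
    (h : (∑ i, a i) / (n * (∏ i, a i) ^ ((1 : ℝ) / n)) ≤ 1 + ε) :
    ∀ j k : Fin n, 1 - 2 * Real.sqrt (n * ε) ≤ a j / a k := by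
  intro j k
  rcases le_or_gt (1 - 2 * Real.sqrt (n * ε)) 0 with h0 | h0
  · exact h0.trans (div_pos (hpos j) (hpos k)).le
  have hn0 : (0:ℝ) < n := by exact_mod_cast Nat.lt_of_lt_of_le Nat.zero_lt_two hn
  set i0 : Fin n := ⟨0, by omega⟩ with hi0def
  set it : Fin n := ⟨n-1, by omega⟩ with hitdef
  have hne : i0 ≠ it := by simp [hi0def, hitdef, Fin.ext_iff]; omega
  have hmax : ∀ i, a i ≤ a it := fun i => hmono (by simp [hitdef, Fin.le_def]; omega)
  have hmin : ∀ i, a i0 ≤ a i := fun i => hmono (by simp [hi0def, Fin.le_def])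
  have hP : (0:ℝ) < ∏ i, a i := Finset.prod_pos (fun i _ => hpos i)
  set G : ℝ := (∏ i, a i) ^ ((1:ℝ)/n) with hGdef
  have hG : 0 < G := Real.rpow_pos_of_pos hP _
  have hGle : G ≤ a it := by
    have h1 : ∏ i, a i ≤ (a it)^n :=
      calc ∏ i, a i ≤ ∏ _i : Fin n, a it :=
            Finset.prod_le_prod (fun i _ => (hpos i).le) (fun i _ => hmax i)
        _ = (a it)^n := by simp
    calc G ≤ ((a it)^n) ^ ((1:ℝ)/n) :=
          Real.rpow_le_rpow hP.le h1 (by positivity)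
      _ = a it := by
          rw [← Real.rpow_natCast (a it) n, ← Real.rpow_mul (hpos it).le]
          rw [mul_one_div, div_self (ne_of_gt hn0), Real.rpow_one]
  set s : ℝ := Real.sqrt (a i0 * a it) with hsdef
  have hs0 : 0 < s := Real.sqrt_pos.2 (mul_pos (hpos i0) (hpos it))
  set b : Fin n → ℝ := Function.update (Function.update a it s) i0 s with hbdef
  have hb : ∀ i, 0 ≤ b i := by
    intro i
    by_cases h1 : i = i0 <;> by_cases h2 : i = it <;>
      simp [hbdef, Function.update_apply, h1, h2, hs0.le, (hpos i).le]
  have hs2 : s * s = a i0 * a it := Real.mul_self_sqrt (mul_pos (hpos i0) (hpos it)).le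
  have hsplit : ∀ f : Fin n → ℝ, ∏ i, f i = f i0 * (f it * ∏ x ∈ (Finset.univ \ {i0}) \ {it}, f x) := by
    intro f
    rw [← Finset.prod_eq_mul_prod_sdiff_singleton_of_mem (by simp [hne.symm] : it ∈ Finset.univ \ {i0}) f,
      ← Finset.prod_eq_mul_prod_sdiff_singleton_of_mem (Finset.mem_univ i0) f]
  have hbrest : ∀ x ∈ (Finset.univ \ {i0}) \ {it}, b x = a x := by
    intro x hx
    simp only [Finset.mem_sdiff, Finset.mem_singleton, Finset.mem_univ] at hx
    simp [hbdef, Function.update_apply, hx.1.2, hx.2]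
  have hbi0 : b i0 = s := by simp [hbdef]
  have hbit : b it = s := by simp [hbdef, Function.update_apply, hne.symm, hne]
  have hprod : ∏ i, b i = ∏ i, a i := by
    rw [hsplit b, hsplit a, Finset.prod_congr rfl hbrest, hbi0, hbit, ← mul_assoc, ← mul_assoc, hs2]
  -- sums
  have hsumsplit : ∀ f : Fin n → ℝ, ∑ i, f i = f i0 + (f it + ∑ x ∈ (Finset.univ \ {i0}) \ {it}, f x) := by
    intro f
    rw [← Finset.sum_eq_add_sum_sdiff_singleton_of_mem (by simp [hne.symm] : it ∈ Finset.univ \ {i0}) f,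
      ← Finset.sum_eq_add_sum_sdiff_singleton_of_mem (Finset.mem_univ i0) f]
  have hsum : ∑ i, b i = ∑ i, a i - (a i0 + a it - 2*s) := by
    rw [hsumsplit b, hsumsplit a, Finset.sum_congr rfl hbrest, hbi0, hbit]; ring
  -- AM-GM for b
  have hamgm : G ≤ (∑ i, b i) / n := by
    have := Real.geom_mean_le_arith_mean_weighted Finset.univ (fun _ => 1/(n:ℝ)) b
      (fun i _ => by positivity) (by simp; field_simp) (fun i _ => hb i)
    rw [Real.finset_prod_rpow _ _ (fun i _ => hb i), hprod] at this
    calc G ≤ ∑ i, (1/(n:ℝ)) * b i := this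
      _ = (∑ i, b i) / n := by rw [← Finset.mul_sum]; ring
  -- from h : ∑ a ≤ (1+ε) n G
  have hA : ∑ i, a i ≤ (1+ε) * (n * G) := by
    rw [div_le_iff₀ (by positivity)] at h; linarith
  have hgap : a i0 + a it - 2*s ≤ n * ε * a it := by
    have h1 : (n:ℝ) * G ≤ ∑ i, b i := by
      rw [le_div_iff₀ hn0] at hamgm; linarith
    have h2 : n * ε * G ≤ n * ε * a it :=
      mul_le_mul_of_nonneg_left hGle (by positivity)
    nlinarith [hsum]
  -- a i0 + a it - 2 s = (√(a it) - √(a i0))^2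
  have hsq : a i0 + a it - 2*s = (Real.sqrt (a it) - Real.sqrt (a i0))^2 := by
    have e1 : Real.sqrt (a i0) ^ 2 = a i0 := Real.sq_sqrt (hpos i0).le
    have e2 : Real.sqrt (a it) ^ 2 = a it := Real.sq_sqrt (hpos it).le
    have e3 : s = Real.sqrt (a i0) * Real.sqrt (a it) := Real.sqrt_mul (hpos i0).le _
    nlinarith
  -- √(a it) - √(a i0) ≤ √(nε) * √(a it)
  have hdiff : Real.sqrt (a it) - Real.sqrt (a i0) ≤ Real.sqrt (n*ε) * Real.sqrt (a it) := by
    have h1 : (Real.sqrt (a it) - Real.sqrt (a i0))^2 ≤ n * ε * a it := by linarith [hgap, hsq]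
    have h2 : Real.sqrt (a it) - Real.sqrt (a i0) ≤ Real.sqrt (n * ε * a it) := by
      rcases le_or_gt (Real.sqrt (a it) - Real.sqrt (a i0)) 0 with hc | hc
      · exact hc.trans (Real.sqrt_nonneg _)
      · exact (Real.le_sqrt hc.le (mul_nonneg (mul_nonneg hn0.le hε) (hpos it).le)).2 h1
    calc Real.sqrt (a it) - Real.sqrt (a i0) ≤ Real.sqrt (n * ε * a it) := h2
      _ = Real.sqrt (n*ε) * Real.sqrt (a it) := Real.sqrt_mul (by positivity) _
  have hkey : a it - a i0 ≤ 2 * Real.sqrt (n*ε) * a it := by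
    have e1 : Real.sqrt (a i0) * Real.sqrt (a i0) = a i0 := Real.mul_self_sqrt (hpos i0).le
    have e2 : Real.sqrt (a it) * Real.sqrt (a it) = a it := Real.mul_self_sqrt (hpos it).le
    have h3 : Real.sqrt (a i0) ≤ Real.sqrt (a it) := Real.sqrt_le_sqrt (hmax i0)
    have h4 : Real.sqrt (a it) + Real.sqrt (a i0) ≤ 2 * Real.sqrt (a it) := by linarith
    have h5 : (Real.sqrt (a it) - Real.sqrt (a i0)) * (Real.sqrt (a it) + Real.sqrt (a i0))
        ≤ (Real.sqrt (n*ε) * Real.sqrt (a it)) * (2 * Real.sqrt (a it)) :=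
      mul_le_mul hdiff h4 (by positivity) (by positivity)
    have h6 : (Real.sqrt (a it) - Real.sqrt (a i0)) * (Real.sqrt (a it) + Real.sqrt (a i0))
        = a it - a i0 := by linear_combination e2 - e1
    have h7 : (Real.sqrt (n*ε) * Real.sqrt (a it)) * (2 * Real.sqrt (a it))
        = 2 * Real.sqrt (n*ε) * a it := by linear_combination 2 * Real.sqrt ((n:ℝ)*ε) * e2
    linarith
  -- conclude
  rw [le_div_iff₀ (hpos k)]
  calc (1 - 2 * Real.sqrt (n*ε)) * a k ≤ (1 - 2 * Real.sqrt (n*ε)) * a it :=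
        mul_le_mul_of_nonneg_left (hmax k) h0.le
    _ ≤ a i0 := by nlinarith
    _ ≤ a j := hmin j
end
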